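/- (Moment asymptotics, from the proof of Theorem 5) For every integer k ≥ 1 there exists a finite constant C_k > 0, not depending on α, such that for every α > 0, lim_{p→∞} ((α+p)/α) · ∫_ℝ Φ(x)^k · τ_p⁻¹ φ((x − μ_p)/τ_p) dx = C_k; that is, the k-th moment of the marginal occurrence probability π = Φ(β), β ~ N(μ_p, τ_p²), satisfies E(π^k) ~ (α/(α+p)) C_k as p → ∞. -/

import Mathlib

open MeasureTheory Real Filter

/-- The standard normal density `φ(x) = (2π)^{-1/2} exp(-x²/2)`. -/
noncomputable def stdNormalPDF (x : ℝ) : ℝ :=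
  (Real.sqrt (2 * Real.pi))⁻¹ * Real.exp (-x ^ 2 / 2)

/-- The standard normal CDF `Φ(x) = ∫_{-∞}^x φ(t) dt`. -/
noncomputable def stdNormalCDF (x : ℝ) : ℝ :=
  ∫ t in Set.Iio x, stdNormalPDF t

/-- `τ_p = √(2 log p)`. -/
noncomputable def tauP (p : ℕ) : ℝ := Real.sqrt (2 * Real.log p)

/-- The density of `N(μ_p, τ_p²)` at `x`, namely `τ_p⁻¹ φ((x - μ_p)/τ_p)`. -/
noncomputable def mvpDens (μ : ℕ → ℝ) (p : ℕ) (x : ℝ) : ℝ :=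
  (tauP p)⁻¹ * stdNormalPDF ((x - μ p) / tauP p)

/-!
Put `a_p = μ_p / √(1 + τ_p²)`, so that `Φ(a_p) = α/(α+p)`. Completing the square gives
`τ⁻¹ φ((x - μ)/τ) = τ⁻¹ φ(a) e^{-(a/τ)²/2} · exp((μ/τ²) x - x²/(2τ²))`. By Mills' ratio,
`-a Φ(a) / φ(a) → 1` as `a → -∞`; hence `log Φ(a) ~ -a²/2`, and comparing with
`log Φ(a_p) ~ -log p = -τ_p²/2` yields `a_p/τ_p → -1`. The prefactor
`Φ(a)⁻¹ τ⁻¹ φ(a) e^{-(a/τ)²/2}` therefore tends to `e^{-1/2}`, while, since `μ/τ² → -1` and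
`1/τ² → 0`, dominated convergence sends the remaining integral to `∫ Φ(x)^k e^{-x} dx`,
which is finite for `k ≥ 1` because `Φ(x) ≤ e^{(1 - x²)/2}` for `x ≤ 0`.
-/

open Set Topology

lemma stdNormalPDF_pos (x : ℝ) : 0 < stdNormalPDF x := by
  unfold stdNormalPDF; positivity

lemma continuous_stdNormalPDF : Continuous stdNormalPDF := by
  unfold stdNormalPDF; fun_prop

lemma stdNormalPDF_eq_mul_exp_neg_mul_sq (x : ℝ) :
    stdNormalPDF x = (√(2 * π))⁻¹ * exp (-(1 / 2) * x ^ 2) := by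
  unfold stdNormalPDF; ring_nf

lemma integrable_stdNormalPDF : Integrable stdNormalPDF := by
  simp_rw [funext stdNormalPDF_eq_mul_exp_neg_mul_sq]
  exact (integrable_exp_neg_mul_sq (by norm_num)).const_mul _

lemma integral_stdNormalPDF : ∫ x, stdNormalPDF x = 1 := by
  simp_rw [stdNormalPDF_eq_mul_exp_neg_mul_sq, integral_const_mul, integral_gaussian]
  rw [show π / (1 / 2) = 2 * π by ring]
  exact inv_mul_cancel₀ (by positivity)

lemma stdNormalPDF_le_exp (x : ℝ) : stdNormalPDF x ≤ exp (-x ^ 2 / 2) := by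
  have h : 1 ≤ √(2 * π) := Real.one_le_sqrt.2 (by nlinarith [pi_gt_three])
  unfold stdNormalPDF
  exact mul_le_of_le_one_left (exp_nonneg _) (inv_le_one_of_one_le₀ h)

lemma hasDerivAt_stdNormalPDF (x : ℝ) :
    HasDerivAt stdNormalPDF (-x * stdNormalPDF x) x := by
  have h : HasDerivAt (fun t : ℝ => -t ^ 2 / 2) (-x) x :=
    ((hasDerivAt_pow 2 x).neg.div_const 2).congr_deriv (by push_cast; ring)
  exact (h.exp.const_mul (√(2 * π))⁻¹).congr_deriv (by rw [stdNormalPDF]; ring)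

lemma tendsto_sq_atBot : Tendsto (fun x : ℝ => x ^ 2) atBot atTop := by
  simpa [Function.comp_def] using
    (tendsto_pow_atTop (α := ℝ) two_ne_zero).comp tendsto_neg_atBot_atTop

lemma tendsto_stdNormalPDF_atBot : Tendsto stdNormalPDF atBot (𝓝 0) := by
  refine squeeze_zero (fun x => (stdNormalPDF_pos x).le) stdNormalPDF_le_exp ?_
  exact tendsto_exp_atBot.comp
    ((tendsto_neg_atTop_atBot.comp tendsto_sq_atBot).atBot_div_const two_pos)

lemma stdNormalCDF_eq_integral_Iic (x : ℝ) :
    stdNormalCDF x = ∫ t in Iic x, stdNormalPDF t :=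
  integral_Iic_eq_integral_Iio.symm

lemma stdNormalCDF_pos (x : ℝ) : 0 < stdNormalCDF x := by
  refine (setIntegral_pos_iff_support_of_nonneg_ae
    (.of_forall fun t => (stdNormalPDF_pos t).le) integrable_stdNormalPDF.integrableOn).2 ?_
  simp [Function.support, (stdNormalPDF_pos _).ne']

lemma monotone_stdNormalCDF : Monotone stdNormalCDF := fun _ _ hxy =>
  setIntegral_mono_set integrable_stdNormalPDF.integrableOn
    (.of_forall fun t => (stdNormalPDF_pos t).le) (.of_forall (Iio_subset_Iio hxy))

lemma stdNormalCDF_le_one (x : ℝ) : stdNormalCDF x ≤ 1 :=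
  integral_stdNormalPDF ▸ setIntegral_le_integral integrable_stdNormalPDF
    (.of_forall fun t => (stdNormalPDF_pos t).le)

lemma integrable_mul_stdNormalPDF : Integrable fun t : ℝ => t * stdNormalPDF t := by
  simp_rw [stdNormalPDF_eq_mul_exp_neg_mul_sq, mul_left_comm _ (√(2 * π))⁻¹]
  exact (integrable_mul_exp_neg_mul_sq (by norm_num)).const_mul _

lemma integral_Iic_neg_mul_stdNormalPDF (x : ℝ) :
    ∫ t in Iic x, -t * stdNormalPDF t = stdNormalPDF x := by
  rw [integral_Iic_of_hasDerivAt_of_tendsto' (fun t _ => hasDerivAt_stdNormalPDF t)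
    (by simpa using integrable_mul_stdNormalPDF.neg.integrableOn) tendsto_stdNormalPDF_atBot,
    sub_zero]

lemma neg_mul_stdNormalCDF_le (x : ℝ) :
    -x * stdNormalCDF x ≤ stdNormalPDF x := by
  rw [stdNormalCDF_eq_integral_Iic, ← integral_const_mul, ← integral_Iic_neg_mul_stdNormalPDF x]
  refine setIntegral_mono_on (integrable_stdNormalPDF.integrableOn.const_mul _)
    (by simpa using integrable_mul_stdNormalPDF.neg.integrableOn) measurableSet_Iic fun t ht => ?_
  exact mul_le_mul_of_nonneg_right (neg_le_neg ht) (stdNormalPDF_pos t).le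

lemma neg_mul_stdNormalPDF_le (x : ℝ) :
    -x * stdNormalPDF x ≤ (x ^ 2 + 1) * stdNormalCDF x := by
  set F : ℝ → ℝ := fun t => -t * stdNormalPDF t / (t ^ 2 + 1)
  set F' : ℝ → ℝ := fun t => stdNormalPDF t * (1 - 2 / (t ^ 2 + 1) ^ 2)
  have hF : ∀ t, HasDerivAt F (F' t) t := fun t => by
    have hnum : HasDerivAt (fun t => -t * stdNormalPDF t) (stdNormalPDF t * (t ^ 2 - 1)) t :=
      ((hasDerivAt_id t).neg.mul (hasDerivAt_stdNormalPDF t)).congr_deriv (by simp; ring)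
    have hden : HasDerivAt (fun t : ℝ => t ^ 2 + 1) (2 * t) t :=
      ((hasDerivAt_pow 2 t).add_const 1).congr_deriv (by push_cast; ring)
    exact (hnum.div hden (by positivity)).congr_deriv (by simp only [F']; field_simp; ring)
  have hF'_le : ∀ t, |F' t| ≤ stdNormalPDF t := fun t => by
    have h2 : 2 / (t ^ 2 + 1) ^ 2 ≤ 2 := div_le_self zero_le_two (one_le_pow₀ (by nlinarith))
    rw [abs_mul, abs_of_pos (stdNormalPDF_pos t)]
    exact mul_le_of_le_one_right (stdNormalPDF_pos t).le
      (abs_le.2 ⟨by linarith, by linarith [div_nonneg zero_le_two (sq_nonneg (t ^ 2 + 1))]⟩)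
  have hF_le : ∀ t, ‖F t‖ ≤ stdNormalPDF t := fun t => by
    have habs : |t| ≤ t ^ 2 + 1 := by nlinarith [sq_abs t, sq_nonneg (|t| - 1)]
    rw [Real.norm_eq_abs, abs_div, abs_mul, abs_neg, abs_of_pos (stdNormalPDF_pos t),
      abs_of_pos (by positivity : (0 : ℝ) < t ^ 2 + 1), div_le_iff₀ (by positivity)]
    nlinarith [stdNormalPDF_pos t]
  have hF'int : Integrable F' :=
    integrable_stdNormalPDF.mono' (continuous_stdNormalPDF.mul (continuous_const.sub
      (continuous_const.div (by fun_prop) fun t => by positivity))).aestronglyMeasurable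
      (.of_forall hF'_le)
  have hFx : ∫ t in Iic x, F' t = F x := by
    rw [integral_Iic_of_hasDerivAt_of_tendsto' (fun t _ => hF t) hF'int.integrableOn
      (squeeze_zero_norm hF_le tendsto_stdNormalPDF_atBot), sub_zero]
  have hle : F x ≤ stdNormalCDF x := by
    rw [← hFx, stdNormalCDF_eq_integral_Iic]
    refine setIntegral_mono_on hF'int.integrableOn integrable_stdNormalPDF.integrableOn
      measurableSet_Iic fun t _ => (le_abs_self _).trans (hF'_le t)
  rwa [div_le_iff₀' (by positivity)] at hle

lemma tendsto_neg_mul_stdNormalCDF_div_stdNormalPDF :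
    Tendsto (fun x => -x * stdNormalCDF x / stdNormalPDF x) atBot (𝓝 1) := by
  have hlow : Tendsto (fun x : ℝ => 1 - (x ^ 2 + 1)⁻¹) atBot (𝓝 1) := by
    simpa using tendsto_const_nhds.sub
      (tendsto_sq_atBot.atTop_add tendsto_const_nhds).inv_tendsto_atTop
  refine tendsto_of_tendsto_of_tendsto_of_le_of_le' hlow tendsto_const_nhds ?_
    (.of_forall fun x => div_le_one_of_le₀ (neg_mul_stdNormalCDF_le x) (stdNormalPDF_pos x).le)
  filter_upwards [eventually_le_atBot 0] with x hx
  have key : x ^ 2 * stdNormalPDF x ≤ (x ^ 2 + 1) * (-x * stdNormalCDF x) := by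
    nlinarith [mul_le_mul_of_nonneg_left (neg_mul_stdNormalPDF_le x) (neg_nonneg.2 hx)]
  rw [le_div_iff₀ (stdNormalPDF_pos x), show 1 - (x ^ 2 + 1)⁻¹ = x ^ 2 / (x ^ 2 + 1) by
    field_simp; ring, div_mul_eq_mul_div, div_le_iff₀' (by positivity)]
  exact key

lemma tendsto_log_div_sq_atBot : Tendsto (fun x : ℝ => log x / x ^ 2) atBot (𝓝 0) := by
  have h := (isLittleO_log_rpow_atTop two_pos).tendsto_div_nhds_zero
  simp only [rpow_two] at h
  simpa [Function.comp_def] using h.comp tendsto_neg_atBot_atTop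

lemma tendsto_log_stdNormalCDF_div_sq :
    Tendsto (fun x => log (stdNormalCDF x) / x ^ 2) atBot (𝓝 (-1 / 2)) := by
  have hinv : Tendsto (fun x : ℝ => (x ^ 2)⁻¹) atBot (𝓝 0) :=
    tendsto_sq_atBot.inv_tendsto_atTop
  have hR := ((continuousAt_log one_ne_zero).tendsto.comp
    tendsto_neg_mul_stdNormalCDF_div_stdNormalPDF).mul hinv
  rw [log_one, zero_mul] at hR
  have hlim := ((hR.sub tendsto_log_div_sq_atBot).add
    (hinv.const_mul (log (√(2 * π))⁻¹))).sub_const (1 / 2)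
  rw [show (0 : ℝ) - 0 + log (√(2 * π))⁻¹ * 0 - 1 / 2 = -1 / 2 by ring] at hlim
  -- `log Φ(x) = log R(x) - log |x| + log (2π)^{-1/2} - x²/2`, `R` being the Mills ratio above
  refine hlim.congr' ?_
  filter_upwards [eventually_lt_atBot 0] with x hx
  have hx0 := hx.ne
  have hΦ := (stdNormalCDF_pos x).ne'
  have hc : (√(2 * π))⁻¹ ≠ 0 := by positivity
  simp only [Function.comp_apply]
  rw [log_div (mul_ne_zero (neg_ne_zero.2 hx0) hΦ) (stdNormalPDF_pos x).ne', log_mul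
    (neg_ne_zero.2 hx0) hΦ, log_neg_eq_log, stdNormalPDF, log_mul hc (exp_pos _).ne', log_exp]
  field_simp
  ring

lemma stdNormalCDF_le_exp {x : ℝ} (hx : x ≤ 0) :
    stdNormalCDF x ≤ exp (1 / 2 - x ^ 2 / 2) := by
  rcases le_or_gt x (-1) with h | h
  · calc stdNormalCDF x ≤ -x * stdNormalCDF x :=
          le_mul_of_one_le_left (stdNormalCDF_pos x).le (by linarith)
      _ ≤ stdNormalPDF x := neg_mul_stdNormalCDF_le x
      _ ≤ exp (-x ^ 2 / 2) := stdNormalPDF_le_exp x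
      _ ≤ exp (1 / 2 - x ^ 2 / 2) := exp_le_exp.2 (by linarith)
  · exact (stdNormalCDF_le_one x).trans (one_le_exp (by nlinarith))

lemma tendsto_atBot_of_tendsto_stdNormalCDF {ι : Type*} {l : Filter ι} {a : ι → ℝ}
    (h : Tendsto (fun i => stdNormalCDF (a i)) l (𝓝 0)) : Tendsto a l atBot :=
  tendsto_atBot.2 fun M => (h.eventually (gt_mem_nhds (stdNormalCDF_pos M))).mono
    fun _ hi => (monotone_stdNormalCDF.reflect_lt hi).le

lemma tendsto_div_of_tendsto_log_stdNormalCDF_div_sq {ι : Type*} {l : Filter ι}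
    {a τ : ι → ℝ} (hτ : Tendsto τ l atTop)
    (h : Tendsto (fun i => log (stdNormalCDF (a i)) / τ i ^ 2) l (𝓝 (-1 / 2))) :
    Tendsto (fun i => a i / τ i) l (𝓝 (-1)) := by
  have hτ2 : Tendsto (fun i => τ i ^ 2) l atTop := (tendsto_pow_atTop two_ne_zero).comp hτ
  have hlog : Tendsto (fun i => log (stdNormalCDF (a i))) l atBot := by
    refine (h.neg_mul_atTop (by norm_num) hτ2).congr' ?_
    filter_upwards [hτ.eventually_gt_atTop 0] with i hi
    field_simp
  have hΦ : Tendsto (fun i => stdNormalCDF (a i)) l (𝓝 0) :=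
    (tendsto_exp_atBot.comp hlog).congr fun i => exp_log (stdNormalCDF_pos _)
  have ha := tendsto_atBot_of_tendsto_stdNormalCDF hΦ
  have hsq : Tendsto (fun i => (a i / τ i) ^ 2) l (𝓝 1) := by
    have := h.div (tendsto_log_stdNormalCDF_div_sq.comp ha) (by norm_num)
    rw [div_self (by norm_num)] at this
    refine this.congr' ?_
    filter_upwards [hlog.eventually_lt_atBot 0, ha.eventually_lt_atBot 0,
      hτ.eventually_gt_atTop 0] with i hlog_neg ha_neg hτ_pos
    simp only [Pi.div_apply, Function.comp_apply]
    field_simp [hlog_neg.ne]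
  have hlim := ((continuous_sqrt.tendsto 1).comp hsq).neg
  rw [sqrt_one] at hlim
  refine hlim.congr' ?_
  filter_upwards [ha.eventually_lt_atBot 0, hτ.eventually_gt_atTop 0] with i ha_neg hτ_pos
  rw [Function.comp_apply, sqrt_sq_eq_abs, abs_of_neg (div_neg_of_neg_of_pos ha_neg hτ_pos),
    neg_neg]

lemma exp_neg_abs_div_two_le (x : ℝ) : exp (-|x| / 2) ≤ 8 * (1 + x ^ 2)⁻¹ := by
  have h := quadratic_le_exp_of_nonneg (by positivity : 0 ≤ |x| / 2)
  rw [neg_div, exp_neg, ← div_eq_mul_inv, inv_eq_one_div,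
    div_le_div_iff₀ (exp_pos _) (by positivity)]
  nlinarith [sq_abs x, abs_nonneg x]

lemma integrable_exp_neg_abs_div_two : Integrable fun x : ℝ => exp (-|x| / 2) :=
  (integrable_inv_one_add_sq.const_mul 8).mono' (by fun_prop) (.of_forall fun x => by
    rw [norm_of_nonneg (exp_pos _).le]; exact exp_neg_abs_div_two_le x)

lemma pow_stdNormalCDF_mul_exp_le {k : ℕ} (hk : 1 ≤ k) {c d : ℝ} (hc₁ : -2 ≤ c)
    (hc₂ : c ≤ -1 / 2) (hd : 0 ≤ d) (x : ℝ) :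
    stdNormalCDF x ^ k * exp (c * x - d * x ^ 2) ≤ exp 4 * exp (-|x| / 2) := by
  have hΦ := (stdNormalCDF_pos x).le
  rw [← exp_add]
  rcases le_or_gt x 0 with hx | hx
  · have hpow : stdNormalCDF x ^ k ≤ stdNormalCDF x :=
      pow_le_of_le_one hΦ (stdNormalCDF_le_one x) (by omega)
    calc stdNormalCDF x ^ k * exp (c * x - d * x ^ 2)
        ≤ exp (1 / 2 - x ^ 2 / 2) * exp (c * x - d * x ^ 2) :=
          mul_le_mul_of_nonneg_right (hpow.trans (stdNormalCDF_le_exp hx)) (exp_pos _).le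
      _ ≤ exp (4 + -|x| / 2) := by
          rw [← exp_add, abs_of_nonpos hx]
          refine exp_le_exp.2 ?_
          nlinarith [mul_nonneg hd (sq_nonneg x), mul_nonpos_of_nonneg_of_nonpos
            (by linarith : 0 ≤ c + 2) hx, sq_nonneg (x + 5 / 2)]
  · calc stdNormalCDF x ^ k * exp (c * x - d * x ^ 2) ≤ 1 * exp (c * x - d * x ^ 2) :=
          mul_le_mul_of_nonneg_right (pow_le_one₀ hΦ (stdNormalCDF_le_one x)) (exp_pos _).le
      _ ≤ exp (4 + -|x| / 2) := by
          rw [one_mul, abs_of_pos hx]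
          refine exp_le_exp.2 ?_
          nlinarith [mul_nonneg hd (sq_nonneg x), mul_le_mul_of_nonneg_right hc₂ hx.le]

lemma tendsto_integral_pow_stdNormalCDF_mul_exp {ι : Type*} {l : Filter ι}
    [l.IsCountablyGenerated] {k : ℕ} (hk : 1 ≤ k) {c d : ι → ℝ}
    (hc : Tendsto c l (𝓝 (-1))) (hd : Tendsto d l (𝓝 0)) (hd₀ : ∀ᶠ i in l, 0 ≤ d i) :
    Tendsto (fun i => ∫ x, stdNormalCDF x ^ k * exp (c i * x - d i * x ^ 2)) l
      (𝓝 (∫ x, stdNormalCDF x ^ k * exp (-x))) := by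
  refine tendsto_integral_filter_of_dominated_convergence (fun x => exp 4 * exp (-|x| / 2))
    (.of_forall fun i => ((monotone_stdNormalCDF.measurable.pow_const k).mul
      (by fun_prop)).aestronglyMeasurable) ?_
    (integrable_exp_neg_abs_div_two.const_mul _) (.of_forall fun x => ?_)
  · filter_upwards [hc.eventually (Icc_mem_nhds (by norm_num : (-2 : ℝ) < -1)
      (by norm_num : (-1 : ℝ) < -1 / 2)), hd₀] with i hci hdi
    refine .of_forall fun x => ?_
    rw [norm_of_nonneg (mul_nonneg (pow_nonneg (stdNormalCDF_pos x).le k) (exp_pos _).le)]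
    exact pow_stdNormalCDF_mul_exp_le hk hci.1 hci.2 hdi x
  · simpa using ((continuous_exp.tendsto _).comp
      ((hc.mul_const x).sub (hd.mul_const (x ^ 2)))).const_mul (stdNormalCDF x ^ k)

lemma integral_pow_stdNormalCDF_mul_exp_neg_pos {k : ℕ} (hk : 1 ≤ k) :
    0 < ∫ x, stdNormalCDF x ^ k * exp (-x) := by
  have hpos : ∀ x, 0 < stdNormalCDF x ^ k * exp (-x) := fun x =>
    mul_pos (pow_pos (stdNormalCDF_pos x) k) (exp_pos _)
  have hint : Integrable fun x => stdNormalCDF x ^ k * exp (-x) :=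
    (integrable_exp_neg_abs_div_two.const_mul (exp 4)).mono'
      ((monotone_stdNormalCDF.measurable.pow_const k).mul (by fun_prop)).aestronglyMeasurable
      (.of_forall fun x => by
        rw [norm_of_nonneg (hpos x).le]
        simpa using pow_stdNormalCDF_mul_exp_le hk (c := -1) (d := 0) (by norm_num) (by norm_num)
          le_rfl x)
  refine (integral_pos_iff_support_of_nonneg (fun x => (hpos x).le) hint).2 ?_
  simp [Function.support, (hpos _).ne']

lemma stdNormalPDF_sub_div (x m : ℝ) {τ : ℝ} (hτ : τ ≠ 0) :
    stdNormalPDF ((x - m) / τ) =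
      stdNormalPDF (m / τ) * exp (m / τ ^ 2 * x - (2 * τ ^ 2)⁻¹ * x ^ 2) := by
  simp only [stdNormalPDF]
  rw [mul_assoc, ← exp_add]
  congr 2
  field_simp
  ring

lemma stdNormalPDF_mul_sqrt_div (a : ℝ) {τ : ℝ} (hτ : τ ≠ 0) :
    stdNormalPDF (a * √(1 + τ ^ 2) / τ) = stdNormalPDF a * exp (-(a / τ) ^ 2 / 2) := by
  simp only [stdNormalPDF]
  rw [mul_assoc, ← exp_add, div_pow, mul_pow, sq_sqrt (by positivity)]
  congr 2
  field_simp
  ring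

lemma integral_mul_normal_density_eq (f : ℝ → ℝ) (a : ℝ) {τ : ℝ} (hτ : τ ≠ 0) :
    ∫ x, f x * (τ⁻¹ * stdNormalPDF ((x - a * √(1 + τ ^ 2)) / τ)) =
      τ⁻¹ * stdNormalPDF a * exp (-(a / τ) ^ 2 / 2) *
        ∫ x, f x * exp (a * √(1 + τ ^ 2) / τ ^ 2 * x - (2 * τ ^ 2)⁻¹ * x ^ 2) := by
  rw [← integral_const_mul]
  congr 1 with x
  rw [stdNormalPDF_sub_div _ _ hτ, stdNormalPDF_mul_sqrt_div _ hτ]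
  ring

lemma tendsto_sqrt_one_add_sq_div {ι : Type*} {l : Filter ι} {τ : ι → ℝ}
    (hτ : Tendsto τ l atTop) : Tendsto (fun i => √(1 + τ i ^ 2) / τ i) l (𝓝 1) := by
  have hτ2 : Tendsto (fun i => τ i ^ 2) l atTop := (tendsto_pow_atTop two_ne_zero).comp hτ
  have h := (continuous_sqrt.tendsto (1 + 0)).comp (hτ2.inv_tendsto_atTop.const_add 1)
  rw [add_zero, sqrt_one] at h
  refine h.congr' ?_
  filter_upwards [hτ.eventually_gt_atTop 0] with i hi
  rw [Function.comp_apply, Pi.inv_apply, show 1 + (τ i ^ 2)⁻¹ = (1 + τ i ^ 2) / τ i ^ 2 by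
    field_simp; ring, sqrt_div' _ (sq_nonneg _), sqrt_sq hi.le]

theorem tendsto_inv_stdNormalCDF_mul_integral_pow_stdNormalCDF {ι : Type*} {l : Filter ι}
    [l.IsCountablyGenerated] {k : ℕ} (hk : 1 ≤ k) {a τ : ι → ℝ} (hτ : Tendsto τ l atTop)
    (ha : Tendsto (fun i => a i / τ i) l (𝓝 (-1))) :
    Tendsto (fun i => (stdNormalCDF (a i))⁻¹ * ∫ x, stdNormalCDF x ^ k *
        ((τ i)⁻¹ * stdNormalPDF ((x - a i * √(1 + τ i ^ 2)) / τ i))) l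
      (𝓝 (exp (-1 / 2) * ∫ x, stdNormalCDF x ^ k * exp (-x))) := by
  have hτ_pos := hτ.eventually_gt_atTop 0
  have ha_bot : Tendsto a l atBot := by
    refine (ha.neg_mul_atTop (by norm_num) hτ).congr' ?_
    filter_upwards [hτ_pos] with i hi
    field_simp
  have hmills := (tendsto_neg_mul_stdNormalCDF_div_stdNormalPDF.comp ha_bot).inv₀ one_ne_zero
  have hexp : Tendsto (fun i => exp (-(a i / τ i) ^ 2 / 2)) l (𝓝 (exp (-1 / 2))) := by
    simpa [Function.comp_def] using (continuous_exp.tendsto _).comp ((ha.pow 2).neg.div_const 2)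
  have hc : Tendsto (fun i => a i * √(1 + τ i ^ 2) / τ i ^ 2) l (𝓝 (-1)) := by
    refine (mul_one (-1 : ℝ) ▸ ha.mul (tendsto_sqrt_one_add_sq_div hτ)).congr' ?_
    filter_upwards [hτ_pos] with i hi
    field_simp
  have hd : Tendsto (fun i => (2 * τ i ^ 2)⁻¹) l (𝓝 0) :=
    (((tendsto_pow_atTop two_ne_zero).comp hτ).const_mul_atTop two_pos).inv_tendsto_atTop
  have hJ := tendsto_integral_pow_stdNormalCDF_mul_exp hk hc hd
    (.of_forall fun i => by positivity)
  have hlim := ((hmills.mul ha.neg).mul hexp).mul hJ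
  rw [show (1 : ℝ)⁻¹ * -(-1) * exp (-1 / 2) = exp (-1 / 2) by norm_num] at hlim
  refine hlim.congr' ?_
  filter_upwards [hτ_pos, ha_bot.eventually_lt_atBot 0] with i hτi hai
  have := hai.ne
  have := (stdNormalPDF_pos (a i)).ne'
  have := (stdNormalCDF_pos (a i)).ne'
  rw [integral_mul_normal_density_eq _ _ hτi.ne', Function.comp_apply]
  field_simp

lemma tendsto_log_add_div_log (c : ℝ) :
    Tendsto (fun x => log (x + c) / log x) atTop (𝓝 1) := by
  have h := ((tendsto_log_comp_add_sub_log c).div_atTop tendsto_log_atTop).const_add 1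
  rw [add_zero] at h
  refine h.congr' ?_
  filter_upwards [eventually_gt_atTop 1] with x hx
  have := (log_pos hx).ne'
  field_simp
  ring

lemma tendsto_tauP_atTop : Tendsto tauP atTop atTop :=
  tendsto_sqrt_atTop.comp ((tendsto_log_atTop.comp tendsto_natCast_atTop_atTop).const_mul_atTop
    two_pos)

lemma tendsto_log_div_add_div_tauP_sq {α : ℝ} (hα : 0 < α) :
    Tendsto (fun p : ℕ => log (α / (α + p)) / tauP p ^ 2) atTop (𝓝 (-1 / 2)) := by
  have h := (((tendsto_const_nhds (x := log α)).div_atTop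
    (tendsto_log_atTop.comp tendsto_natCast_atTop_atTop)).sub
    ((tendsto_log_add_div_log α).comp tendsto_natCast_atTop_atTop)).div_const 2
  rw [show ((0 : ℝ) - 1) / 2 = -1 / 2 by norm_num] at h
  refine h.congr' ?_
  filter_upwards [eventually_gt_atTop 1] with p hp
  have hlog := (log_pos (Nat.one_lt_cast.2 hp)).ne'
  simp only [Function.comp_apply]
  rw [tauP, sq_sqrt (by positivity), log_div hα.ne' (by positivity), add_comm α]
  field_simp

/-- Moment asymptotics (from the proof of Theorem 5): for every `k ≥ 1` there is a
finite constant `C_k > 0`, not depending on `α`, such that for every `α > 0`,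
`lim_{p→∞} ((α+p)/α) ∫ Φ(x)^k τ_p⁻¹ φ((x-μ_p)/τ_p) dx = C_k`. -/
theorem mvpIBP_moment_asymptotics (k : ℕ) (hk : 1 ≤ k) :
    ∃ C : ℝ, 0 < C ∧
      ∀ α : ℝ, 0 < α → ∀ μ : ℕ → ℝ,
        (∀ p : ℕ, 2 ≤ p →
          stdNormalCDF (μ p / Real.sqrt (1 + tauP p ^ 2)) = α / (α + p)) →
        Filter.Tendsto
          (fun p : ℕ => ((α + p) / α) * ∫ x : ℝ, stdNormalCDF x ^ k * mvpDens μ p x)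
          Filter.atTop (nhds C) := by
  refine ⟨exp (-1 / 2) * ∫ x, stdNormalCDF x ^ k * exp (-x),
    mul_pos (exp_pos _) (integral_pow_stdNormalCDF_mul_exp_neg_pos hk), fun α hα μ hμ => ?_⟩
  set a : ℕ → ℝ := fun p => μ p / √(1 + tauP p ^ 2)
  have hlog : Tendsto (fun p => log (stdNormalCDF (a p)) / tauP p ^ 2) atTop (𝓝 (-1 / 2)) := by
    refine (tendsto_log_div_add_div_tauP_sq hα).congr' ?_
    filter_upwards [eventually_ge_atTop 2] with p hp
    rw [hμ p hp]
  refine (tendsto_inv_stdNormalCDF_mul_integral_pow_stdNormalCDF hk tendsto_tauP_atTop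
    (tendsto_div_of_tendsto_log_stdNormalCDF_div_sq tendsto_tauP_atTop hlog)).congr' ?_
  filter_upwards [eventually_ge_atTop 2] with p hp
  simp only [a, mvpDens]
  rw [hμ p hp, inv_div, div_mul_cancel₀ _ (sqrt_pos.2 (by positivity)).ne']
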